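/- Let n ≥ 1, let J ∈ GL_{2n}(ℝ) be the antidiagonal matrix with entries J_{i,2n+1−i} = 1, and let θ(g) = J · ᵗg⁻¹ · J for g ∈ GL_{2n}(ℝ). Let γ ∈ GL_{2n}(ℝ) be such that δ := θ(γ)·γ has 2n pairwise distinct complex eigenvalues, at least one of which has absolute value different from 1. Then there exist x ∈ GL_{2n}(ℝ) and i ∈ {1, 2} with 2i ≤ 2n such that x⁻¹ γ θ(x) lies in the standard block-diagonal subgroup GL_i × GL_{2n−2i} × GL_i of GL_{2n}(ℝ) (matrices that are block diagonal with blocks of sizes i, 2n−2i, i); this subgroup is the Levi subgroup of a proper θ-stable standard parabolic. -/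

import Mathlib

/-!
Put `E = J γ` and `δ = θ(γ) γ`. Then `Eᵀ δ = E`, so `uᵀ E w = ab · uᵀ E w` for eigenvectors
`δ u = a u`, `δ w = b w`: eigenvectors are `E`-orthogonal unless `ab = 1`, and as `E` is
invertible, the inverse of every eigenvalue is again an eigenvalue. Fix an eigenvalue `c` with
`|c| > 1` and split the eigenvalues into `{c, c̄}`, their inverses, and the rest. Each class is
stable under conjugation, so the rows `Re((1 + i) v)` of a conjugation-stable eigenbasis form a
real basis adapted to the classes, in which `E` pairs the first class only with the last one and
the middle class only with itself. If `P` has these rows, ordered by class, then `x = γ Pᵀ`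
gives `x⁻¹ γ θ(x) = (J (P E Pᵀ)ᵀ)⁻¹`, which is block diagonal.
-/

open Matrix Polynomial

/-- The antidiagonal matrix `J` of size `m` over `ℝ`, with `J_{i, m+1-i} = 1` (1-indexed). -/
def Jmat (m : ℕ) : Matrix (Fin m) (Fin m) ℝ :=
  Matrix.of fun i j => if (i : ℕ) + (j : ℕ) = m - 1 then 1 else 0

/-- The involutive automorphism `θ(g) = J ᵗg⁻¹ J` of `GL_m(ℝ)`. -/
noncomputable def theta (m : ℕ) (g : Matrix (Fin m) (Fin m) ℝ) :
    Matrix (Fin m) (Fin m) ℝ :=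
  Jmat m * (g⁻¹)ᵀ * Jmat m

/-- The block (`0`, `1` or `2`) in which an index falls, for blocks of sizes
`(i, 2n−2i, i)`. -/
def blockIdx (n i : ℕ) (a : Fin (2 * n)) : ℕ :=
  if (a : ℕ) < i then 0 else if (a : ℕ) < 2 * n - i then 1 else 2

/-- `m` lies in the standard block-diagonal subgroup `GL_i × GL_{2n−2i} × GL_i`:
all entries outside the three diagonal blocks of sizes `(i, 2n−2i, i)` vanish. -/
def IsBlockDiag (n i : ℕ) (m : Matrix (Fin (2 * n)) (Fin (2 * n)) ℝ) : Prop :=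
  ∀ a b : Fin (2 * n), blockIdx n i a ≠ blockIdx n i b → m a b = 0

lemma Jmat_apply {m : ℕ} (a b : Fin m) : Jmat m a b = if b = a.rev then 1 else 0 := by
  have := a.is_lt
  have := b.is_lt
  simp only [Jmat, of_apply, Fin.ext_iff, Fin.val_rev]
  congr 1
  exact propext (by omega)

lemma Jmat_transpose (m : ℕ) : (Jmat m)ᵀ = Jmat m := by
  ext a b
  simp only [transpose_apply, Jmat_apply, eq_comm (a := b), ← Fin.rev_eq_iff]

lemma Jmat_mul_self (m : ℕ) : Jmat m * Jmat m = 1 := by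
  ext a b
  rw [mul_apply, Finset.sum_eq_single a.rev] <;> simp +contextual [Jmat_apply, one_apply, eq_comm]

lemma Jmat_inv (m : ℕ) : (Jmat m)⁻¹ = Jmat m :=
  inv_eq_left_inv (Jmat_mul_self m)

lemma isUnit_Jmat (m : ℕ) : IsUnit (Jmat m) :=
  IsUnit.of_mul_eq_one _ (Jmat_mul_self m)

lemma transpose_mul_theta_mul {m : ℕ} {γ : Matrix (Fin m) (Fin m) ℝ} (hγ : IsUnit γ) :
    (Jmat m * γ)ᵀ * (theta m γ * γ) = Jmat m * γ := by
  have hγ' : IsUnit γᵀ.det := by rwa [det_transpose, ← isUnit_iff_isUnit_det]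
  simp only [theta, transpose_mul, Jmat_transpose, Matrix.mul_assoc]
  rw [← Matrix.mul_assoc (Jmat m) (Jmat m), Jmat_mul_self, Matrix.one_mul,
    transpose_nonsing_inv, ← Matrix.mul_assoc, mul_nonsing_inv _ hγ', Matrix.one_mul]

lemma inv_mul_mul_theta_mul_transpose {m : ℕ} {γ : Matrix (Fin m) (Fin m) ℝ} (hγ : IsUnit γ)
    (P : Matrix (Fin m) (Fin m) ℝ) :
    (γ * Pᵀ)⁻¹ * γ * theta m (γ * Pᵀ) = (Jmat m * (P * (Jmat m * γ) * Pᵀ)ᵀ)⁻¹ := by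
  have hγ' : IsUnit γ.det := (isUnit_iff_isUnit_det γ).mp hγ
  simp only [theta, Matrix.mul_inv_rev, transpose_mul, transpose_transpose, Jmat_transpose,
    transpose_nonsing_inv, Jmat_inv, Matrix.mul_assoc]
  rw [← Matrix.mul_assoc γ⁻¹ γ, nonsing_inv_mul _ hγ', Matrix.one_mul]

lemma blockIdx_le_two {n i : ℕ} (a : Fin (2 * n)) : blockIdx n i a ≤ 2 := by
  unfold blockIdx
  split_ifs <;> omega

lemma blockIdx_rev {n i : ℕ} (hi : i ≤ n) (a : Fin (2 * n)) :
    blockIdx n i a.rev = 2 - blockIdx n i a := by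
  have := a.is_lt
  simp only [blockIdx, Fin.val_rev]
  split_ifs <;> omega

lemma IsBlockDiag.inv {n i : ℕ} {M : Matrix (Fin (2 * n)) (Fin (2 * n)) ℝ}
    (hM : IsBlockDiag n i M) : IsBlockDiag n i M⁻¹ := by
  by_cases hdet : IsUnit M.det
  · let := invertibleOfIsUnitDet M hdet
    have upper : BlockTriangular M⁻¹ (blockIdx n i) :=
      blockTriangular_inv_of_blockTriangular fun a b h => hM a b h.ne'
    have lower : BlockTriangular M⁻¹ (OrderDual.toDual ∘ blockIdx n i) :=
      blockTriangular_inv_of_blockTriangular fun a b h => hM a b (ne_of_lt h)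
    intro a b hab
    rcases hab.lt_or_gt with h | h
    · exact lower h
    · exact upper h
  · simp [nonsing_inv_apply_not_isUnit _ hdet, IsBlockDiag]

lemma isBlockDiag_Jmat_mul_transpose {n i : ℕ} (hi : i ≤ n)
    {G : Matrix (Fin (2 * n)) (Fin (2 * n)) ℝ}
    (hG : ∀ a b, blockIdx n i a + blockIdx n i b ≠ 2 → G a b = 0) :
    IsBlockDiag n i (Jmat (2 * n) * Gᵀ) := by
  intro a b hab
  have := blockIdx_le_two (i := i) a
  have hG' : G b a.rev = 0 := hG b a.rev (by rw [blockIdx_rev hi]; omega)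
  simp [mul_apply, Jmat_apply, hG']

section Eigenvectors

variable {ι K : Type*} [Fintype ι] [Field K]

lemma isRoot_charpoly_iff_exists_mulVec_eq_smul [DecidableEq ι] {A : Matrix ι ι K} {z : K} :
    A.charpoly.IsRoot z ↔ ∃ v ≠ 0, A *ᵥ v = z • v := by
  rw [IsRoot.def, eval_charpoly, ← exists_mulVec_eq_zero_iff]
  simp [sub_mulVec, sub_eq_zero, eq_comm]

lemma isRoot_charpoly_iff_of_eq_prod [DecidableEq ι] {A : Matrix ι ι K} {μ : ι → K}
    (hchar : A.charpoly = ∏ k, (X - C (μ k))) {z : K} :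
    A.charpoly.IsRoot z ↔ ∃ k, μ k = z := by
  rw [hchar, isRoot_prod]
  simp [sub_eq_zero, eq_comm]

lemma linearIndependent_of_mulVec_eq_smul [DecidableEq ι] {A : Matrix ι ι K} {μ : ι → K}
    (hμ : Function.Injective μ) {v : ι → ι → K} (hv0 : ∀ k, v k ≠ 0)
    (hv : ∀ k, A *ᵥ v k = μ k • v k) : LinearIndependent K v :=
  Module.End.eigenvectors_linearIndependent' (toLin' A) μ hμ v fun k =>
    ⟨Module.End.mem_eigenspace_iff.mpr (by simpa using hv k), hv0 k⟩

lemma dotProduct_mulVec_eq_zero_of_mulVec_eq_smul {E A : Matrix ι ι K} (hEA : Eᵀ * A = E)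
    {u w : ι → K} {a b : K} (hu : A *ᵥ u = a • u) (hw : A *ᵥ w = b • w) (hab : a * b ≠ 1) :
    u ⬝ᵥ E *ᵥ w = 0 := by
  have swap : ∀ {u w : ι → K} {b : K}, A *ᵥ w = b • w →
      u ⬝ᵥ E *ᵥ w = b * (w ⬝ᵥ E *ᵥ u) := fun {u w b} hw => by
    conv_lhs => rw [← hEA, ← mulVec_mulVec, hw]
    rw [mulVec_smul, dotProduct_smul, smul_eq_mul, dotProduct_mulVec, vecMul_transpose,
      dotProduct_comm]
  have h : (1 - a * b) * (u ⬝ᵥ E *ᵥ w) = 0 := by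
    linear_combination swap (u := u) hw + b * swap (u := w) hu
  exact (mul_eq_zero.mp h).resolve_left (sub_ne_zero.mpr hab.symm)

lemma dotProduct_mulVec_eq_zero_of_mem_span (E : Matrix ι ι K) {s t : Set (ι → K)}
    (h : ∀ u ∈ s, ∀ w ∈ t, u ⬝ᵥ E *ᵥ w = 0) {u w : ι → K}
    (hu : u ∈ Submodule.span K s) (hw : w ∈ Submodule.span K t) : u ⬝ᵥ E *ᵥ w = 0 := by
  classical
  have right : ∀ u ∈ s, Submodule.span K t ≤ LinearMap.ker (toLinearMap₂' K E u) :=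
    fun u hu => Submodule.span_le.mpr fun w hw => by simpa [toLinearMap₂'_apply'] using h u hu w hw
  have left : Submodule.span K s ≤ LinearMap.ker ((toLinearMap₂' K E).flip w) :=
    Submodule.span_le.mpr fun u hu' => by simpa [toLinearMap₂'_apply'] using right u hu' hw
  simpa [toLinearMap₂'_apply'] using left hu

lemma exists_mul_eq_one_of_charpoly_eq_prod [DecidableEq ι] {E A : Matrix ι ι K}
    (hE : IsUnit E) (hEA : Eᵀ * A = E) {μ : ι → K} (hinj : Function.Injective μ)
    (hchar : A.charpoly = ∏ k, (X - C (μ k))) (k : ι) : ∃ j, μ k * μ j = 1 := by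
  choose v hv0 hAv using fun k => isRoot_charpoly_iff_exists_mulVec_eq_smul.mp
    ((isRoot_charpoly_iff_of_eq_prod hchar).mpr ⟨k, rfl⟩)
  have hV : IsUnit (of v) :=
    linearIndependent_rows_iff_isUnit.mp (linearIndependent_of_mulVec_eq_smul hinj hv0 hAv)
  by_contra! h
  -- The Gram matrix of the form in the eigenbasis `v` is invertible, yet its `k`-th row vanishes.
  have hG : IsUnit (of v * E * (of v)ᵀ).det :=
    (isUnit_iff_isUnit_det _).mp ((hV.mul hE).mul (isUnit_transpose _ |>.mpr hV))
  refine hG.ne_zero (det_eq_zero_of_row_eq_zero k fun j => ?_)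
  rw [mul_mul_apply, transpose_transpose]
  exact dotProduct_mulVec_eq_zero_of_mulVec_eq_smul hEA (hAv k) (hAv j) (h j)

end Eigenvectors

section RealMatrices

open ComplexConjugate

variable {ι : Type*} [Fintype ι]

lemma map_mulVec_star (A : Matrix ι ι ℝ) (v : ι → ℂ) :
    A.map (algebraMap ℝ ℂ) *ᵥ star v = star (A.map (algebraMap ℝ ℂ) *ᵥ v) := by
  ext b
  simp [mulVec, dotProduct]

lemma map_mulVec_star_eq_smul {A : Matrix ι ι ℝ} {v : ι → ℂ} {z : ℂ}
    (h : A.map (algebraMap ℝ ℂ) *ᵥ v = z • v) :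
    A.map (algebraMap ℝ ℂ) *ᵥ star v = conj z • star v := by
  rw [map_mulVec_star, h, star_smul, Complex.star_def]

variable [DecidableEq ι]

lemma exists_real_mulVec_eq_smul {A : Matrix ι ι ℝ} {r : ℝ}
    (h : (A.map (algebraMap ℝ ℂ)).charpoly.IsRoot (r : ℂ)) :
    ∃ v : ι → ℂ, v ≠ 0 ∧ A.map (algebraMap ℝ ℂ) *ᵥ v = r • v ∧ star v = v := by
  rw [charpoly_map, ← Complex.coe_algebraMap,
    isRoot_map_iff (algebraMap ℝ ℂ).injective, isRoot_charpoly_iff_exists_mulVec_eq_smul] at h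
  obtain ⟨v, hv0, hv⟩ := h
  refine ⟨algebraMap ℝ ℂ ∘ v, ?_, ?_, ?_⟩
  · exact fun h0 => hv0 (funext fun b => by simpa using congrFun h0 b)
  · ext b
    rw [← RingHom.map_mulVec, hv]
    simp
  · ext b
    simp

lemma exists_involutive_conj {A : Matrix ι ι ℝ} {μ : ι → ℂ} (hinj : Function.Injective μ)
    (hchar : (A.map (algebraMap ℝ ℂ)).charpoly = ∏ k, (X - C (μ k))) :
    ∃ κ : ι → ι, Function.Involutive κ ∧ ∀ k, μ (κ k) = conj (μ k) := by
  have hroot := fun z => isRoot_charpoly_iff_of_eq_prod (z := z) hchar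
  have hconj : ∀ k, ∃ j, μ j = conj (μ k) := fun k => by
    obtain ⟨v, hv0, hv⟩ :=
      isRoot_charpoly_iff_exists_mulVec_eq_smul.mp ((hroot _).mpr ⟨k, rfl⟩)
    exact (hroot _).mp (isRoot_charpoly_iff_exists_mulVec_eq_smul.mpr
      ⟨star v, star_ne_zero.mpr hv0, map_mulVec_star_eq_smul hv⟩)
  choose κ hκ using hconj
  exact ⟨κ, fun k => hinj (by rw [hκ, hκ, Complex.conj_conj]), hκ⟩

lemma exists_eigenvectors_star {A : Matrix ι ι ℝ} {μ : ι → ℂ} {κ : ι → ι}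
    (hκ : Function.Involutive κ) (hμκ : ∀ k, μ (κ k) = conj (μ k))
    (hroot : ∀ k, (A.map (algebraMap ℝ ℂ)).charpoly.IsRoot (μ k)) :
    ∃ v : ι → ι → ℂ, ∀ k, v k ≠ 0 ∧ A.map (algebraMap ℝ ℂ) *ᵥ v k = μ k • v k ∧
      v (κ k) = star (v k) := by
  classical
  -- An arbitrary linear order picks one representative `k ≤ κ k` of each orbit.
  let _ : LinearOrder ι := linearOrderOfSTO WellOrderingRel
  have hw : ∀ k, ∃ w : ι → ℂ, w ≠ 0 ∧ A.map (algebraMap ℝ ℂ) *ᵥ w = μ k • w ∧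
      (κ k = k → star w = w) := fun k => by
    by_cases hk : κ k = k
    · have hreal : ((μ k).re : ℂ) = μ k := Complex.conj_eq_iff_re.mp (by rw [← hμκ, hk])
      obtain ⟨w, hw0, hw, hwreal⟩ := exists_real_mulVec_eq_smul (hreal ▸ hroot k)
      exact ⟨w, hw0, hreal ▸ hw, fun _ => hwreal⟩
    · obtain ⟨w, hw0, hw⟩ := isRoot_charpoly_iff_exists_mulVec_eq_smul.mp (hroot k)
      exact ⟨w, hw0, hw, fun h => absurd h hk⟩
  choose w hw0 hw hwreal using hw
  refine ⟨fun k => if k ≤ κ k then w k else star (w (κ k)), fun k => ⟨?_, ?_, ?_⟩⟩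
  · dsimp only
    split_ifs
    · exact hw0 k
    · exact star_ne_zero.mpr (hw0 _)
  · dsimp only
    split_ifs
    · exact hw k
    · rw [map_mulVec_star_eq_smul (hw _), hμκ, Complex.conj_conj]
  · rcases lt_trichotomy k (κ k) with h | h | h
    · simp [h.le, hκ k, h.not_ge]
    · simp [← h, hwreal k h.symm]
    · simp [h.not_ge, hκ k, h.le]

end RealMatrices

section Realification

open ComplexConjugate Complex Submodule

variable {ι : Type*} [Fintype ι]

lemma transpose_map_mul_map {R S : Type*} [CommSemiring R] [CommSemiring S] (f : R →+* S)
    {E A : Matrix ι ι R} (h : Eᵀ * A = E) : (E.map f)ᵀ * A.map f = E.map f := by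
  rw [← transpose_map, ← Matrix.map_mul, h]

variable [DecidableEq ι]

lemma exists_isUnit_real_rows_mem_span {v : ι → ι → ℂ} (hv : LinearIndependent ℂ v)
    {κ : ι → ι} (hκ : Function.Involutive κ) (hvκ : ∀ k, v (κ k) = star (v k)) :
    ∃ Q : Matrix ι ι ℝ, IsUnit Q ∧
      ∀ k, Q.map (algebraMap ℝ ℂ) k ∈ span ℂ {v k, v (κ k)} := by
  -- For `v_k, v_{κ k} = x ± i y` these rows are `x - y` and `x + y`: no orbit representatives
  -- need to be chosen.
  set Q : Matrix ι ι ℝ := of fun k b => ((1 + I) * v k b).re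
  have hQ : ∀ k, Q.map (algebraMap ℝ ℂ) k = ((1 + I) / 2) • v k + ((1 - I) / 2) • v (κ k) := by
    intro k
    ext b
    simp only [Q, map_apply, of_apply, Complex.coe_algebraMap, re_eq_add_conj, map_mul, map_add,
      map_one, conj_I, Pi.add_apply, Pi.smul_apply, smul_eq_mul, hvκ, Pi.star_apply,
      Complex.star_def]
    ring
  have hv_mem : ∀ k, v k ∈ span ℂ (Set.range (Q.map (algebraMap ℝ ℂ))) := by
    intro k
    have hk : v k = (-I) • (((1 + I) / 2) • Q.map (algebraMap ℝ ℂ) k -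
        ((1 - I) / 2) • Q.map (algebraMap ℝ ℂ) (κ k)) := by
      rw [hQ, hQ, hκ k]
      ext b
      simp only [Pi.smul_apply, Pi.sub_apply, Pi.add_apply, smul_eq_mul]
      linear_combination v k b * I_sq
    rw [hk]
    exact smul_mem _ _ (sub_mem (smul_mem _ _ (subset_span ⟨k, rfl⟩))
      (smul_mem _ _ (subset_span ⟨κ k, rfl⟩)))
  have hQc : IsUnit (Q.map (algebraMap ℝ ℂ)) := by
    refine linearIndependent_rows_iff_isUnit.mp
      (linearIndependent_of_top_le_span_of_card_eq_finrank ?_ (by simp))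
    rw [← hv.span_eq_top_of_card_eq_finrank' (by simp)]
    exact span_le.mpr (Set.range_subset_iff.mpr hv_mem)
  refine ⟨Q, ?_, fun k => ?_⟩
  · rw [isUnit_iff_isUnit_det] at hQc ⊢
    rwa [← RingHom.mapMatrix_apply, ← RingHom.map_det, isUnit_map_iff] at hQc
  · rw [hQ]
    exact add_mem (smul_mem _ _ (subset_span (by simp))) (smul_mem _ _ (subset_span (by simp)))

lemma exists_isUnit_real_orthogonal {E A : Matrix ι ι ℝ} (hEA : Eᵀ * A = E) {μ : ι → ℂ}
    (hinj : Function.Injective μ)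
    (hchar : (A.map (algebraMap ℝ ℂ)).charpoly = ∏ k, (X - C (μ k))) :
    ∃ Q : Matrix ι ι ℝ, IsUnit Q ∧
      ∀ a b, μ a * μ b ≠ 1 → μ a * conj (μ b) ≠ 1 → Q a ⬝ᵥ E *ᵥ Q b = 0 := by
  obtain ⟨κ, hκ, hμκ⟩ := exists_involutive_conj hinj hchar
  obtain ⟨v, hv⟩ := exists_eigenvectors_star hκ hμκ fun k =>
    (isRoot_charpoly_iff_of_eq_prod hchar).mpr ⟨k, rfl⟩
  choose hv0 hAv hvκ using hv
  obtain ⟨Q, hQ, hQv⟩ :=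
    exists_isUnit_real_rows_mem_span (linearIndependent_of_mulVec_eq_smul hinj hv0 hAv) hκ hvκ
  refine ⟨Q, hQ, fun a b hab hab' => ?_⟩
  set f := algebraMap ℝ ℂ
  have horth : ∀ c d, μ c * μ d ≠ 1 → v c ⬝ᵥ E.map f *ᵥ v d = 0 := fun c d =>
    dotProduct_mulVec_eq_zero_of_mulVec_eq_smul (transpose_map_mul_map f hEA) (hAv c) (hAv d)
  have hmap : f (Q a ⬝ᵥ E *ᵥ Q b) = Q.map f a ⬝ᵥ E.map f *ᵥ Q.map f b := by
    rw [RingHom.map_dotProduct]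
    congr 1
    ext c
    exact RingHom.map_mulVec f E (Q b) c
  refine f.injective ?_
  rw [hmap, map_zero]
  refine dotProduct_mulVec_eq_zero_of_mem_span _ ?_ (hQv a) (hQv b)
  have hconj : conj (μ a) * μ b ≠ 1 := by
    simpa using (map_ne_one_iff _ (starRingEnd ℂ).injective).mpr hab'
  have hconj' : conj (μ a) * conj (μ b) ≠ 1 := by
    simpa using (map_ne_one_iff _ (starRingEnd ℂ).injective).mpr hab
  rintro u (rfl | rfl) w (rfl | rfl) <;> apply horth <;> simpa only [hμκ]

end Realification

section EigenvalueType

open ComplexConjugate Finset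

lemma exists_one_lt_norm {ι 𝕜 : Type*} [NormedField 𝕜] {μ : ι → 𝕜}
    (hinv : ∀ k, ∃ j, μ k * μ j = 1) (habs : ∃ k, ‖μ k‖ ≠ 1) : ∃ k, 1 < ‖μ k‖ := by
  obtain ⟨k, hk⟩ := habs
  obtain ⟨j, hj⟩ := hinv k
  have hkj : ‖μ k‖ * ‖μ j‖ = 1 := by rw [← norm_mul, hj, norm_one]
  rcases hk.lt_or_gt with h | h
  · exact ⟨j, by nlinarith [norm_nonneg (μ k)]⟩
  · exact ⟨k, h⟩

noncomputable def conjPair (c : ℂ) : Finset ℂ := {c, conj c}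

lemma norm_eq_of_mem_conjPair {c z : ℂ} (h : z ∈ conjPair c) : ‖z‖ = ‖c‖ := by
  rcases mem_insert.mp h with rfl | h
  · rfl
  · rw [mem_singleton.mp h, Complex.norm_conj]

lemma inv_notMem_conjPair {c z : ℂ} (hc : 1 < ‖c‖) (h : z ∈ conjPair c) :
    z⁻¹ ∉ conjPair c := fun h' => by
  have hz := norm_eq_of_mem_conjPair h
  have hz' := norm_eq_of_mem_conjPair h'
  rw [norm_inv, hz] at hz'
  have := inv_lt_one_of_one_lt₀ hc
  linarith

lemma conj_mem_conjPair_iff {c z : ℂ} : conj z ∈ conjPair c ↔ z ∈ conjPair c := by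
  have e1 : conj z = c ↔ z = conj c :=
    ⟨fun h => by rw [← h, Complex.conj_conj], fun h => by rw [h, Complex.conj_conj]⟩
  have e2 : conj z = conj c ↔ z = c := (starRingEnd ℂ).injective.eq_iff
  simp only [conjPair, mem_insert, mem_singleton, e1, e2, or_comm]

/-- The block of `GL_i × GL_{2n−2i} × GL_i` receiving the eigenvalue `z` when the first block
receives `{c, c̄}`. -/
noncomputable def eigenType (c z : ℂ) : ℕ :=
  if z ∈ conjPair c then 0 else if z⁻¹ ∈ conjPair c then 2 else 1

lemma eigenType_le_two (c z : ℂ) : eigenType c z ≤ 2 := by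
  unfold eigenType
  split_ifs <;> omega

lemma eigenType_eq_zero_iff {c z : ℂ} : eigenType c z = 0 ↔ z ∈ conjPair c := by
  unfold eigenType
  split_ifs <;> simp_all

lemma eigenType_eq_two_iff {c z : ℂ} (hc : 1 < ‖c‖) :
    eigenType c z = 2 ↔ z⁻¹ ∈ conjPair c := by
  by_cases h1 : z ∈ conjPair c
  · simp [eigenType, h1, inv_notMem_conjPair hc h1]
  · by_cases h2 : z⁻¹ ∈ conjPair c <;> simp [eigenType, h1, h2]

lemma eigenType_conj (c z : ℂ) : eigenType c (conj z) = eigenType c z := by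
  simp only [eigenType, ← map_inv₀, conj_mem_conjPair_iff]

lemma eigenType_inv {c : ℂ} (hc : 1 < ‖c‖) (z : ℂ) : eigenType c z⁻¹ = 2 - eigenType c z := by
  by_cases h1 : z ∈ conjPair c
  · simp [eigenType, h1, inv_notMem_conjPair hc h1]
  · by_cases h2 : z⁻¹ ∈ conjPair c <;> simp [eigenType, h1, h2]

lemma mul_ne_one_of_eigenType_add_ne_two {c z w : ℂ} (hc : 1 < ‖c‖)
    (h : eigenType c z + eigenType c w ≠ 2) : z * w ≠ 1 := fun hzw => by
  rw [eq_inv_of_mul_eq_one_right hzw, eigenType_inv hc] at h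
  have := eigenType_le_two c z
  omega

end EigenvalueType

section Sorting

open Finset

lemma card_filter_mem_eq_card {ι α : Type*} [Fintype ι] [DecidableEq α] {f : ι → α}
    (hf : Function.Injective f) {s : Finset α} (hs : ↑s ⊆ Set.range f) :
    #{k | f k ∈ s} = #s := by
  rw [← card_image_of_injective _ hf]
  congr 1
  ext z
  simp only [mem_image, mem_filter, mem_univ, true_and]
  constructor
  · rintro ⟨k, hk, rfl⟩
    exact hk
  · intro hz
    obtain ⟨k, rfl⟩ := hs hz
    exact ⟨k, hz, rfl⟩

lemma Fin.lt_card_filter_le_iff {N : ℕ} {α : Type*} [LinearOrder α] {g : Fin N → α}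
    (hg : Monotone g) (k : α) (a : Fin N) : (a : ℕ) < #{b | g b ≤ k} ↔ g a ≤ k := by
  constructor
  · intro ha
    by_contra! hk
    have hsub : ({b | g b ≤ k} : Finset (Fin N)) ⊆ Iio a := fun b hb => by
      simp only [mem_filter, mem_univ, true_and] at hb
      exact mem_Iio.mpr (lt_of_not_ge fun hab => (hk.trans_le (hg hab)).not_ge hb)
    have := card_le_card hsub
    rw [Fin.card_Iio] at this
    omega
  · intro hk
    have hsub : Iic a ⊆ ({b | g b ≤ k} : Finset (Fin N)) := fun b hb => by
      simp only [mem_filter, mem_univ, true_and]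
      exact (hg (mem_Iic.mp hb)).trans hk
    have := card_le_card hsub
    rw [Fin.card_Iic] at this
    omega

lemma eq_blockIdx_of_monotone {n i : ℕ} {g : Fin (2 * n) → ℕ} (hg : Monotone g)
    (hg2 : ∀ a, g a ≤ 2) (h0 : #{a | g a = 0} = i) (h2 : #{a | g a = 2} = i) (a : Fin (2 * n)) :
    g a = blockIdx n i a := by
  have e0 : #{a | g a ≤ 0} = i := by simpa only [Nat.le_zero] using h0
  have e1 : #{a | g a ≤ 1} = 2 * n - i := by
    have := card_filter_add_card_filter_not (s := univ) (fun a => g a ≤ 1)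
    have hneg : #{a | ¬g a ≤ 1} = #{a | g a = 2} :=
      congrArg card (filter_congr fun a _ => by have := hg2 a; omega)
    rw [hneg, h2, card_univ, Fintype.card_fin] at this
    omega
  have := Fin.lt_card_filter_le_iff hg 0 a
  have := Fin.lt_card_filter_le_iff hg 1 a
  have := hg2 a
  unfold blockIdx
  split_ifs <;> omega

end Sorting

open ComplexConjugate Finset in
lemma exists_perm_eigenType_eq_blockIdx {n : ℕ} {μ : Fin (2 * n) → ℂ}
    (hinj : Function.Injective μ) (hconj : ∀ k, ∃ j, μ j = conj (μ k))
    (hinv : ∀ k, ∃ j, μ k * μ j = 1) {c : ℂ} (hc : c ∈ Set.range μ) (hc1 : 1 < ‖c‖) :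
    ∃ i, (i = 1 ∨ i = 2) ∧ i ≤ n ∧
      ∃ σ : Equiv.Perm (Fin (2 * n)), ∀ a, eigenType c (μ (σ a)) = blockIdx n i a := by
  set g := fun k => eigenType c (μ k)
  have hP : ↑(conjPair c) ⊆ Set.range μ := by
    obtain ⟨k₀, rfl⟩ := hc
    intro z hz
    rcases mem_insert.mp hz with rfl | hz
    · exact ⟨k₀, rfl⟩
    · rw [mem_singleton.mp hz]
      exact hconj k₀
  have hPinv : ↑(conjPair c) ⊆ Set.range fun k => (μ k)⁻¹ := by
    intro z hz
    obtain ⟨k, rfl⟩ := hP hz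
    obtain ⟨j, hj⟩ := hinv k
    exact ⟨j, inv_eq_of_mul_eq_one_left hj⟩
  have h0 : #{k | g k = 0} = #(conjPair c) := by
    simp only [g, eigenType_eq_zero_iff]
    exact card_filter_mem_eq_card hinj hP
  have h2 : #{k | g k = 2} = #(conjPair c) := by
    simp only [g, eigenType_eq_two_iff hc1]
    exact card_filter_mem_eq_card (inv_injective.comp hinj) hPinv
  have hcard : #(conjPair c) = 1 ∨ #(conjPair c) = 2 := by
    rcases eq_or_ne c (conj c) with h | h
    · simp [conjPair, ← h]
    · exact Or.inr (card_pair h)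
  have hle : #{k | g k = 0} + #{k | g k = 2} ≤ 2 * n := by
    rw [← card_union_of_disjoint (disjoint_filter.mpr fun k _ h0 h2 => by omega)]
    exact (card_le_univ _).trans_eq (Fintype.card_fin _)
  have hperm : ∀ m, #{a | g (Tuple.sort g a) = m} = #{k | g k = m} := fun m =>
    card_equiv (Tuple.sort g) (by simp)
  refine ⟨_, hcard, by omega, Tuple.sort g,
    eq_blockIdx_of_monotone (Tuple.monotone_sort g) (fun a => eigenType_le_two _ _) ?_ ?_⟩
  · exact (hperm 0).trans h0
  · exact (hperm 2).trans h2

theorem strongly_regular_not_elliptic_conjugate_into_Levi_general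
    (n : ℕ)
    (γ : Matrix (Fin (2 * n)) (Fin (2 * n)) ℝ) (hγ : IsUnit γ)
    (μ : Fin (2 * n) → ℂ) (hinj : Function.Injective μ)
    (hchar : ((theta (2 * n) γ * γ).map (algebraMap ℝ ℂ)).charpoly =
      ∏ i : Fin (2 * n), (X - C (μ i)))
    (habs : ∃ i, ‖μ i‖ ≠ 1) :
    ∃ (x : Matrix (Fin (2 * n)) (Fin (2 * n)) ℝ) (i : ℕ), IsUnit x ∧
      (i = 1 ∨ i = 2) ∧ 2 * i ≤ 2 * n ∧
      IsBlockDiag n i (x⁻¹ * γ * theta (2 * n) x) := by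
  have hEδ := transpose_mul_theta_mul hγ
  have hinv := exists_mul_eq_one_of_charpoly_eq_prod
    (((isUnit_Jmat _).mul hγ).map (algebraMap ℝ ℂ).mapMatrix) (transpose_map_mul_map _ hEδ)
    hinj hchar
  obtain ⟨κ, -, hμκ⟩ := exists_involutive_conj hinj hchar
  obtain ⟨Q, hQ, hQE⟩ := exists_isUnit_real_orthogonal hEδ hinj hchar
  obtain ⟨k₀, hk₀⟩ := exists_one_lt_norm hinv habs
  obtain ⟨i, hi, hin, σ, hσ⟩ :=
    exists_perm_eigenType_eq_blockIdx hinj (fun k => ⟨κ k, hμκ k⟩) hinv ⟨k₀, rfl⟩ hk₀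
  refine ⟨γ * (Q.submatrix σ id)ᵀ, i, ?_, hi, by omega, ?_⟩
  · exact hγ.mul ((isUnit_transpose _).mpr ((isUnit_submatrix_equiv σ (Equiv.refl _)).mpr hQ))
  rw [inv_mul_mul_theta_mul_transpose hγ]
  refine (isBlockDiag_Jmat_mul_transpose hin fun a b hab => ?_).inv
  rw [← hσ, ← hσ] at hab
  rw [mul_mul_apply, transpose_transpose]
  exact hQE _ _ (mul_ne_one_of_eigenType_add_ne_two hk₀ hab)
    (mul_ne_one_of_eigenType_add_ne_two hk₀ (by rwa [eigenType_conj]))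

/-- Let `γ ∈ GL_{2n}(ℝ)` be such that `δ = θ(γ)γ` has `2n` pairwise
distinct complex eigenvalues (expressed via its characteristic polynomial over `ℂ`), one
of which has absolute value `≠ 1`. Then `γ` is `θ`-conjugate to an element of the Levi
subgroup `GL_i × GL_{2n−2i} × GL_i` of a proper `θ`-stable standard parabolic, for
`i = 1` or `i = 2`. -/
theorem strongly_regular_not_elliptic_conjugate_into_Levi
    (n : ℕ) (hn : 1 ≤ n)
    (γ : Matrix (Fin (2 * n)) (Fin (2 * n)) ℝ) (hγ : IsUnit γ)
    (μ : Fin (2 * n) → ℂ) (hinj : Function.Injective μ)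
    (hchar : ((theta (2 * n) γ * γ).map (algebraMap ℝ ℂ)).charpoly =
      ∏ i : Fin (2 * n), (X - C (μ i)))
    (habs : ∃ i, ‖μ i‖ ≠ 1) :
    ∃ (x : Matrix (Fin (2 * n)) (Fin (2 * n)) ℝ) (i : ℕ), IsUnit x ∧
      (i = 1 ∨ i = 2) ∧ 2 * i ≤ 2 * n ∧
      IsBlockDiag n i (x⁻¹ * γ * theta (2 * n) x) :=
  strongly_regular_not_elliptic_conjugate_into_Levi_general n γ hγ μ hinj hchar habs
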